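/- arXiv:2412.19503 — 3 statements merged into one kernel-verified Lean document; each statement's English description precedes it below -/
import Mathlib

section
/- For all nonnegative integers n and r, the number of partitions of n whose smallest even positive integer not appearing as a part equals 2r+2 is equal to the coefficient of q^n in q^{r(r+1)}/∏_{m≥1, m≠2r+2}(1-q^m). -/
open PowerSeries Finset

noncomputable def qPoch (n : ℕ) : PowerSeries ℚ :=
  ∏ k ∈ Finset.range n, (1 - (X : PowerSeries ℚ) ^ (k + 1))

noncomputable def gauss (L : ℕ) (s : ℤ) : PowerSeries ℚ :=
  if 0 ≤ s ∧ s ≤ (L : ℤ) then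
    qPoch L * (qPoch s.toNat)⁻¹ * (qPoch (L - s.toNat))⁻¹
  else 0
/-- The smallest positive odd integer that is not a part of `p`. -/
noncomputable def mexOdd {n : ℕ} (p : n.Partition) : ℕ :=
  sInf {m : ℕ | m % 2 = 1 ∧ m ∉ p.parts}

/-- The smallest positive even integer that is not a part of `p`. -/
noncomputable def mexEven {n : ℕ} (p : n.Partition) : ℕ :=
  sInf {m : ℕ | 0 < m ∧ m % 2 = 0 ∧ m ∉ p.parts}

/-!
A partition has `mexEven` equal to `2r+2` exactly when it contains each of `2, 4, …, 2r` and
not `2r+2`. Removing one copy of each of `2, 4, …, 2r` (of total size `r(r+1)`) is a bijection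
onto the partitions of `n - r(r+1)` with no part `2r+2`, which the Euler product
`∏_{m ≠ 2r+2} 1/(1 - q^m)` counts; factors with `m > n` do not affect the coefficient of `q^n`.
-/

namespace Nat.Partition

theorem sum_le_of_le_parts {n : ℕ} {s : Multiset ℕ} {p : n.Partition} (h : s ≤ p.parts) :
    s.sum ≤ n := by
  obtain ⟨t, ht⟩ := Multiset.le_iff_exists_add.1 h
  rw [← p.parts_sum, ht, Multiset.sum_add]
  exact Nat.le_add_right _ _

def partitionWithPartsEquiv {n : ℕ} (s : Multiset ℕ) (hs0 : ∀ i ∈ s, 0 < i) (hs : s.sum ≤ n) :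
    {p : n.Partition // s ≤ p.parts} ≃ (n - s.sum).Partition where
  toFun p :=
    { parts := p.1.parts - s
      parts_pos := fun hi ↦ p.1.parts_pos (Multiset.mem_of_le (Multiset.sub_le_self _ _) hi)
      parts_sum := by
        have := congrArg Multiset.sum (tsub_add_cancel_of_le p.2)
        rw [Multiset.sum_add, p.1.parts_sum] at this
        omega }
  invFun q :=
    ⟨{ parts := q.parts + s
       parts_pos := fun hi ↦ (Multiset.mem_add.1 hi).elim q.parts_pos (hs0 _)
       parts_sum := by rw [Multiset.sum_add, q.parts_sum]; omega },
     Multiset.le_add_left _ _⟩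
  left_inv p := Subtype.ext <| Nat.Partition.ext <| tsub_add_cancel_of_le p.2
  right_inv q := Nat.Partition.ext <| add_tsub_cancel_right _ _

@[simp]
theorem partitionWithPartsEquiv_apply_parts {n : ℕ} (s : Multiset ℕ) (hs0 : ∀ i ∈ s, 0 < i)
    (hs : s.sum ≤ n) (p : {p : n.Partition // s ≤ p.parts}) :
    (partitionWithPartsEquiv s hs0 hs p).parts = p.1.parts - s :=
  rfl

def partitionWithPartsWithoutPartEquiv {n a : ℕ} (s : Multiset ℕ) (hs0 : ∀ i ∈ s, 0 < i)
    (hs : s.sum ≤ n) (ha : a ∉ s) :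
    {p : n.Partition // s ≤ p.parts ∧ a ∉ p.parts} ≃ {q : (n - s.sum).Partition // a ∉ q.parts} :=
  (Equiv.subtypeSubtypeEquivSubtypeInter _ _).symm.trans <|
    (partitionWithPartsEquiv s hs0 hs).subtypeEquiv fun p ↦ by
      rw [partitionWithPartsEquiv_apply_parts, ← Multiset.count_eq_zero, ← Multiset.count_eq_zero,
        Multiset.count_sub, Multiset.count_eq_zero_of_notMem ha, Nat.sub_zero]

theorem restricted_mem_erase_Icc {d N : ℕ} (hd : d ≤ N) (a : ℕ) :
    restricted d (· ∈ (Icc 1 N).erase a) = univ.filter fun p : d.Partition ↦ a ∉ p.parts := by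
  ext p
  simp only [restricted, mem_filter, mem_univ, true_and, mem_erase, mem_Icc]
  exact ⟨fun h ha ↦ (h a ha).1 rfl, fun h i hi ↦
    ⟨fun hia ↦ h (hia ▸ hi), p.parts_pos hi, (p.le_of_mem_parts hi).trans hd⟩⟩

open PowerSeries.WithPiTopology in
theorem coeff_inv_prod_one_sub_X_pow (S : Finset ℕ) (hS : 0 ∉ S) (d : ℕ) :
    coeff d (∏ m ∈ S, (1 - X ^ m : ℚ⟦X⟧))⁻¹ = #(restricted d (· ∈ S)) := by
  set f : ℕ → ℚ⟦X⟧ := fun m ↦ if m ∈ S then 1 - X ^ m else 1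
  have hP : HasProd (fun i ↦ f (i + 1)) (∏ m ∈ S, (1 - X ^ m)) := by
    have hf : ∀ m ∉ Set.range (· + 1), f m = 1 := by
      intro m hm
      obtain rfl : m = 0 := by
        by_contra h
        exact hm ⟨m - 1, Nat.sub_add_cancel (Nat.one_le_iff_ne_zero.2 h)⟩
      simp [f, hS]
    rw [show (fun i ↦ f (i + 1)) = f ∘ (· + 1) from rfl, (add_left_injective 1).hasProd_iff hf,
      ← prod_congr rfl fun m hm ↦ if_pos hm]
    exact hasProd_prod_of_ne_finset_one fun m hm ↦ if_neg hm
  -- Euler's product for `restricted` partitions is, factor by factor, the inverse of `hP`.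
  have hmul := (hasProd_powerSeriesMk_card_restricted ℚ (· ∈ S)).mul hP
  have hone : (PowerSeries.mk fun n ↦ (#(restricted n (· ∈ S)) : ℚ)) *
      ∏ m ∈ S, (1 - X ^ m) = 1 := by
    refine hmul.unique ?_
    convert hasProd_one with i
    simp only [f]
    split_ifs
    · simp only [pow_mul]
      exact tsum_pow_mul_one_sub_of_constantCoeff_eq_zero (by simp)
    · exact one_mul 1
  have hP0 : constantCoeff (∏ m ∈ S, (1 - X ^ m : ℚ⟦X⟧)) ≠ 0 := by
    rw [map_prod]
    exact prod_ne_zero_iff.2 fun m hm ↦ by simp [ne_of_mem_of_not_mem hm hS]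
  rw [← (PowerSeries.eq_inv_iff_mul_eq_one hP0).2 hone, coeff_mk]

end Nat.Partition

def firstEvens (r : ℕ) : Finset ℕ :=
  (range r).map ⟨fun i ↦ 2 * (i + 1), fun i j h ↦ by simpa using h⟩

theorem mem_firstEvens {r m : ℕ} : m ∈ firstEvens r ↔ ∃ i < r, 2 * (i + 1) = m := by
  simp only [firstEvens, mem_map, mem_range]
  rfl

theorem sum_firstEvens (r : ℕ) : (firstEvens r).val.sum = r * (r + 1) := by
  change ∑ i ∈ range r, 2 * (i + 1) = r * (r + 1)
  induction r with
  | zero => rfl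
  | succ r ih => rw [sum_range_succ, ih]; ring

theorem mexEven_eq_iff {n : ℕ} (p : n.Partition) (r : ℕ) :
    mexEven p = 2 * r + 2 ↔ (firstEvens r).val ≤ p.parts ∧ 2 * r + 2 ∉ p.parts := by
  rw [Multiset.le_iff_subset (firstEvens r).nodup, mexEven]
  set T := {m : ℕ | 0 < m ∧ m % 2 = 0 ∧ m ∉ p.parts}
  constructor
  · intro h
    have hT : T.Nonempty := by
      by_contra hT
      rw [Set.not_nonempty_iff_eq_empty.1 hT, Nat.sInf_empty] at h
      omega
    refine ⟨fun m hm ↦ ?_, h ▸ (Nat.sInf_mem hT).2.2⟩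
    obtain ⟨i, hi, rfl⟩ := mem_firstEvens.1 hm
    by_contra hn
    have := Nat.sInf_le (show 2 * (i + 1) ∈ T from ⟨by omega, by omega, hn⟩)
    omega
  · rintro ⟨hE, ha⟩
    have haT : 2 * r + 2 ∈ T := ⟨by omega, by omega, ha⟩
    refine le_antisymm (Nat.sInf_le haT) (le_csInf ⟨_, haT⟩ ?_)
    rintro m ⟨hm0, hm2, hmp⟩
    by_contra! hlt
    exact hmp (hE (mem_firstEvens.2 ⟨m / 2 - 1, by omega, by omega⟩))

/-- The number of partitions of `n` whose smallest even positive non-part equals `2r+2`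
equals the coefficient of `q^n` in `q^{r(r+1)} / ∏_{m ≥ 1, m ≠ 2r+2} (1 - q^m)`. -/
theorem stmt1 (n r : ℕ) :
    (Nat.card {p : n.Partition // mexEven p = 2 * r + 2} : ℚ) =
      PowerSeries.coeff n ((X : PowerSeries ℚ) ^ (r * (r + 1)) *
        (∏ m ∈ (Finset.Icc 1 n).erase (2 * r + 2),
          (1 - (X : PowerSeries ℚ) ^ m))⁻¹) := by
  have hpos : ∀ i ∈ (firstEvens r).val, 0 < i := fun i hi ↦ by
    obtain ⟨j, -, rfl⟩ := mem_firstEvens.1 hi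
    omega
  have hnotMem : 2 * r + 2 ∉ (firstEvens r).val := fun h ↦ by
    obtain ⟨j, hj, hj'⟩ := mem_firstEvens.1 h
    omega
  rw [coeff_X_pow_mul', Nat.card_congr (Equiv.subtypeEquivRight fun p ↦ mexEven_eq_iff p r)]
  split_ifs with hk
  · rw [← sum_firstEvens] at hk ⊢
    rw [Nat.card_congr (Nat.Partition.partitionWithPartsWithoutPartEquiv _ hpos hk hnotMem),
      Nat.Partition.coeff_inv_prod_one_sub_X_pow _ (by simp),
      Nat.Partition.restricted_mem_erase_Icc (Nat.sub_le _ _), Nat.card_eq_fintype_card,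
      Fintype.card_subtype]
  · have : IsEmpty {p : n.Partition // (firstEvens r).val ≤ p.parts ∧ 2 * r + 2 ∉ p.parts} :=
      ⟨fun p ↦ hk (sum_firstEvens r ▸ Nat.Partition.sum_le_of_le_parts p.2.1)⟩
    rw [Nat.card_of_isEmpty, Nat.cast_zero]
end

section
/- As formal power series in q, the identity ∑_{n≥r} q^{n^2+n} / ((q;q)_{n-r} (q;q)_{n+r+1}) = q^{r(r+1)} / (q;q)_∞ holds for every nonnegative integer r. -/
open PowerSeries Finset

/-! Writing `n = r + m`, the left side is `q^{r(r+1)} F_{2r+1}` with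
`F_k = ∑_m q^{m(m+k)} / ((q;q)_m (q;q)_{m+k})`. Splitting the factor `1 - q^{k+1}` off the
denominators gives `F_k = (1 - q^{k+1}) F_{k+1} + q^{k+1} F_{k+2}`, that is
`F_k - F_{k+1} = q^{k+1} (F_{k+2} - F_{k+1})`. By strong induction on `N`, the coefficients of
`q^j` with `j < N` do not depend on `k`, hence neither does that of `q^N`; and for `k ≥ N` only
the term `1 / (q;q)_k` of `F_k` reaches `q^N`, where it agrees with `1 / (q;q)_∞`. -/

lemma qPoch_zero : qPoch 0 = 1 := by
  simp [qPoch]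

lemma qPoch_succ (n : ℕ) : qPoch (n + 1) = qPoch n * (1 - X ^ (n + 1)) :=
  Finset.prod_range_succ _ _

lemma inv_qPoch_eq_mul_inv_qPoch_succ (n : ℕ) :
    (qPoch n)⁻¹ = (1 - X ^ (n + 1)) * (qPoch (n + 1))⁻¹ := by
  rw [qPoch_succ, PowerSeries.mul_inv_rev, ← mul_assoc,
    PowerSeries.mul_inv_cancel _ (by simp), one_mul]

lemma coeff_inv_qPoch_of_le {N M : ℕ} (h : N ≤ M) :
    coeff N (qPoch M)⁻¹ = coeff N (qPoch N)⁻¹ := by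
  induction M, h using Nat.le_induction with
  | base => rfl
  | succ M _ ih =>
    have hsplit : (qPoch (M + 1))⁻¹ = (qPoch M)⁻¹ + X ^ (M + 1) * (qPoch (M + 1))⁻¹ := by
      rw [inv_qPoch_eq_mul_inv_qPoch_succ M]; ring
    rw [hsplit, map_add, coeff_X_pow_mul', if_neg (by omega), add_zero, ih]

noncomputable def durfeeTerm (k m : ℕ) : PowerSeries ℚ :=
  X ^ (m * (m + k)) * (qPoch m)⁻¹ * (qPoch (m + k))⁻¹

noncomputable def durfeeSum (k L : ℕ) : PowerSeries ℚ :=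
  ∑ m ∈ range L, durfeeTerm k m

lemma durfeeSum_succ (k L : ℕ) : durfeeSum k (L + 1) = durfeeSum k L + durfeeTerm k L :=
  sum_range_succ _ _

lemma durfeeTerm_zero (k : ℕ) : durfeeTerm k 0 = (qPoch k)⁻¹ := by
  simp [durfeeTerm, qPoch_zero]

lemma durfeeTerm_zero_eq (k : ℕ) : durfeeTerm k 0 = (1 - X ^ (k + 1)) * durfeeTerm (k + 1) 0 := by
  rw [durfeeTerm_zero, durfeeTerm_zero, inv_qPoch_eq_mul_inv_qPoch_succ]

lemma durfeeTerm_succ_eq (k m : ℕ) :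
    durfeeTerm k (m + 1) =
      (1 - X ^ (k + 1)) * durfeeTerm (k + 1) (m + 1) + X ^ (k + 1) * durfeeTerm (k + 2) m := by
  unfold durfeeTerm
  rw [show m + 1 + (k + 1) = m + 1 + k + 1 by ring, show m + (k + 2) = m + 1 + k + 1 by ring,
    inv_qPoch_eq_mul_inv_qPoch_succ (m + 1 + k), inv_qPoch_eq_mul_inv_qPoch_succ m]
  ring

lemma durfeeSum_succ_eq (k L : ℕ) :
    durfeeSum k (L + 1) =
      (1 - X ^ (k + 1)) * durfeeSum (k + 1) (L + 1) + X ^ (k + 1) * durfeeSum (k + 2) L := by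
  induction L with
  | zero => simpa [durfeeSum] using durfeeTerm_zero_eq k
  | succ L ih =>
    rw [durfeeSum_succ, ih, durfeeTerm_succ_eq, durfeeSum_succ (k + 1) (L + 1),
      durfeeSum_succ (k + 2) L]
    ring

lemma coeff_durfeeTerm_eq_zero {N k m : ℕ} (h : N < m * (m + k)) : coeff N (durfeeTerm k m) = 0 := by
  rw [durfeeTerm, mul_assoc, coeff_X_pow_mul', if_neg (by omega)]

lemma coeff_durfeeSum_of_le {N k L : ℕ} (hk : N ≤ k) (hL : 0 < L) :
    coeff N (durfeeSum k L) = coeff N (qPoch N)⁻¹ := by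
  rw [durfeeSum, map_sum, sum_eq_single_of_mem 0 (mem_range.2 hL), durfeeTerm_zero,
    coeff_inv_qPoch_of_le hk]
  intro m _ hm
  apply coeff_durfeeTerm_eq_zero
  have : 1 * (1 + k) ≤ m * (m + k) := Nat.mul_le_mul (by omega) (by omega)
  omega

theorem coeff_durfeeSum (N : ℕ) :
    ∀ k L, N < L → coeff N (durfeeSum k L) = coeff N (qPoch N)⁻¹ := by
  induction N using Nat.strong_induction_on with
  | _ N IH =>
    suffices ∀ d k L, N ≤ k + d → N < L → coeff N (durfeeSum k L) = coeff N (qPoch N)⁻¹ from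
      fun k L => this N k L (by omega)
    intro d
    induction d with
    | zero => exact fun k L hk hL => coeff_durfeeSum_of_le (by omega) (by omega)
    | succ d ihd =>
      intro k L hk hL
      by_cases hNk : N ≤ k
      · exact coeff_durfeeSum_of_le hNk (by omega)
      obtain ⟨L, rfl⟩ : ∃ L', L = L' + 1 := ⟨L - 1, by omega⟩
      -- the two lower-order terms have the same coefficient, by the outer induction
      have hlow : coeff (N - (k + 1)) (durfeeSum (k + 2) L) =
          coeff (N - (k + 1)) (durfeeSum (k + 1) (L + 1)) := by
        rw [IH _ (by omega) _ _ (by omega), IH _ (by omega) _ _ (by omega)]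
      rw [durfeeSum_succ_eq, sub_mul, one_mul, map_add, map_sub, coeff_X_pow_mul',
        coeff_X_pow_mul', hlow, sub_add_cancel, ihd (k + 1) (L + 1) (by omega) hL]

lemma summand_eq_X_pow_mul_durfeeTerm (r m : ℕ) :
    (X : PowerSeries ℚ) ^ ((r + m) ^ 2 + (r + m)) * (qPoch (r + m - r))⁻¹ *
        (qPoch (r + m + r + 1))⁻¹ = X ^ (r * (r + 1)) * durfeeTerm (2 * r + 1) m := by
  rw [durfeeTerm, Nat.add_sub_cancel_left, show m + (2 * r + 1) = r + m + r + 1 by ring,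
    show (r + m) ^ 2 + (r + m) = r * (r + 1) + m * (r + m + r + 1) by ring, pow_add]
  ring

/-- `∑_{n ≥ r} q^{n²+n} / ((q;q)_{n-r} (q;q)_{n+r+1}) = q^{r(r+1)} / (q;q)_∞` as formal
power series: the coefficient of `q^N` on either side agrees for every `N` (terms with
`n > N + r` and factors `(1 - q^k)` with `k > N` do not affect this coefficient). -/
theorem stmt3 (r : ℕ) : ∀ N : ℕ,
    PowerSeries.coeff (R := ℚ) N (∑ n ∈ Finset.Icc r (N + r),
        (X : PowerSeries ℚ) ^ (n ^ 2 + n) * (qPoch (n - r))⁻¹ * (qPoch (n + r + 1))⁻¹) =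
      PowerSeries.coeff (R := ℚ) N ((X : PowerSeries ℚ) ^ (r * (r + 1)) * (qPoch N)⁻¹) := by
  intro N
  have hsum : (∑ n ∈ Icc r (N + r),
      (X : PowerSeries ℚ) ^ (n ^ 2 + n) * (qPoch (n - r))⁻¹ * (qPoch (n + r + 1))⁻¹)
      = X ^ (r * (r + 1)) * durfeeSum (2 * r + 1) (N + 1) := by
    rw [← Ico_add_one_right_eq_Icc, sum_Ico_eq_sum_range, durfeeSum, mul_sum,
      show N + r + 1 - r = N + 1 by omega]
    exact sum_congr rfl fun m _ => summand_eq_X_pow_mul_durfeeTerm r m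
  rw [hsum, coeff_X_pow_mul', coeff_X_pow_mul']
  split_ifs with hr
  · rw [coeff_durfeeSum _ _ _ (by omega)]
    exact (coeff_inv_qPoch_of_le (by omega)).symm
  · rfl
end

section
/- For 0 ≤ r ≤ s ≤ L with 2s ≤ L + r, the subtracted Gaussian polynomial identity [L choose s-r]_q - [L choose s-r-1]_q = [L choose s'-0]_q - [L choose s'-1]_q holds with s' = s - r; equivalently, the q-enumeration of binary sequences of length L with s ones and ε₁-value r equals that of sequences with s-r ones and ε₁-value 0. -/
open PowerSeries Finset

/-- Extension of a finite binary sequence to `ℕ` by `false`. -/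
def ext (L : ℕ) (η : Fin L → Bool) (j : ℕ) : Bool :=
  if h : j < L then η ⟨j, h⟩ else false

/-- The energy `E(η) = ∑_{j=1}^{L-1} j · [η_j = 0 ∧ η_{j+1} = 1]` (1-based). -/
def energy (L : ℕ) (η : Fin L → Bool) : ℕ :=
  ∑ j ∈ Finset.range (L - 1),
    if ext L η j = false ∧ ext L η (j + 1) = true then j + 1 else 0

/-- The number of ones in the binary sequence. -/
def ones (L : ℕ) (η : Fin L → Bool) : ℕ :=
  ∑ i : Fin L, if η i = true then 1 else 0

/-- The path encoding: `S_0 = 0`, `S_i = S_{i-1} + 1 - 2 η_i`. -/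
def pathS (L : ℕ) (η : Fin L → Bool) (i : ℕ) : ℤ :=
  ∑ j ∈ Finset.range i, (1 - 2 * (if ext L η j = true then 1 else 0))

/-- `ε₁(η) = - min_{0 ≤ i ≤ L} S_i(η)`. -/
def eps1 (L : ℕ) (η : Fin L → Bool) : ℤ :=
  - (Finset.range (L + 1)).inf' ⟨0, Finset.mem_range.mpr (Nat.succ_pos L)⟩ (pathS L η)

section helpers
variable {L : ℕ}

lemma ext_eq_false {η : Fin L → Bool} {j : ℕ} (h : L ≤ j) : ext L η j = false := by
  simp [_root_.ext, Nat.not_lt.mpr h]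

lemma pathS_zero (η : Fin L → Bool) : pathS L η 0 = 0 := by simp [pathS]

lemma pathS_succ (η : Fin L → Bool) (j : ℕ) :
    pathS L η (j + 1) = pathS L η j + (1 - 2 * (if ext L η j = true then 1 else 0)) := by
  simp only [pathS, Finset.sum_range_succ]

def flipb (L : ℕ) (η : Fin L → Bool) (i : ℕ) : Fin L → Bool :=
  fun j => if (j : ℕ) = i then !η j else η j

lemma ext_flipb (η : Fin L → Bool) {i : ℕ} (hi : i < L) (k : ℕ) :
    ext L (flipb L η i) k = if k = i then !(ext L η k) else ext L η k := by
  unfold flipb _root_.ext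
  by_cases h : k < L
  · simp only [dif_pos h]
  · have hk : k ≠ i := by omega
    simp [dif_neg h, hk]

lemma flipb_flipb (η : Fin L → Bool) (i : ℕ) : flipb L (flipb L η i) i = η := by
  funext j
  by_cases h : (j : ℕ) = i <;> simp [flipb, h]

lemma pathS_flipb (η : Fin L → Bool) {i : ℕ} (hi : i < L) (j : ℕ) :
    pathS L (flipb L η i) j =
      pathS L η j + (if i < j then (if ext L η i = true then (2:ℤ) else -2) else 0) := by
  have hterm : ∀ k, (1 - 2 * (if ext L (flipb L η i) k = true then (1:ℤ) else 0)) =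
      (1 - 2 * (if ext L η k = true then (1:ℤ) else 0)) +
      (if k = i then (if ext L η i = true then (2:ℤ) else -2) else 0) := by
    intro k
    rw [ext_flipb η hi k]
    by_cases h : k = i
    · subst h
      by_cases hb : ext L η k = true <;> simp [hb]
    · simp [h]
  unfold pathS
  simp only [hterm, Finset.sum_add_distrib]
  rw [Finset.sum_ite_eq' (Finset.range j) i fun _ => (if ext L η i = true then (2:ℤ) else -2)]
  simp [Finset.mem_range]

lemma ones_eq_sum (η : Fin L → Bool) :
    (ones L η : ℤ) = ∑ k ∈ Finset.range L, (if ext L η k = true then (1:ℤ) else 0) := by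
  rw [← Fin.sum_univ_eq_sum_range (fun k => if ext L η k = true then (1:ℤ) else 0) L]
  unfold ones
  push_cast
  apply Finset.sum_congr rfl
  intro i _
  have : ext L η i = η i := by simp [_root_.ext, i.isLt]
  rw [this]

lemma pathS_length (η : Fin L → Bool) :
    pathS L η L = (L : ℤ) - 2 * (ones L η : ℤ) := by
  rw [ones_eq_sum]
  unfold pathS
  rw [Finset.sum_sub_distrib, Finset.sum_const, Finset.card_range, ← Finset.mul_sum]
  simp

lemma ones_flipb (η : Fin L → Bool) {i : ℕ} (hi : i < L) :
    (ones L (flipb L η i) : ℤ) = (ones L η : ℤ) + (if ext L η i = true then -1 else 1) := by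
  have h1 := pathS_length (flipb L η i)
  have h2 := pathS_length η
  have h3 := pathS_flipb η hi L
  rw [if_pos hi, h1, h2] at h3
  by_cases hb : ext L η i = true
  · rw [if_pos hb] at h3
    rw [if_pos hb]
    linarith
  · rw [if_neg hb] at h3
    rw [if_neg hb]
    linarith

lemma eps1_le {η : Fin L → Bool} {e : ℤ} (h : eps1 L η = e) {j : ℕ} (hj : j ≤ L) :
    -e ≤ pathS L η j := by
  unfold eps1 at h
  have h2 : -e = (Finset.range (L + 1)).inf'
      ⟨0, Finset.mem_range.mpr (Nat.succ_pos L)⟩ (pathS L η) := by omega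
  rw [h2]
  exact Finset.inf'_le _ (Finset.mem_range.mpr (by omega))

lemma eps1_attained {η : Fin L → Bool} {e : ℤ} (h : eps1 L η = e) :
    ∃ j ≤ L, pathS L η j = -e := by
  unfold eps1 at h
  obtain ⟨b, hb, hbe⟩ := Finset.exists_mem_eq_inf' (s := Finset.range (L + 1))
    ⟨0, Finset.mem_range.mpr (Nat.succ_pos L)⟩ (pathS L η)
  rw [Finset.mem_range] at hb
  refine ⟨b, by omega, by rw [← hbe]; omega⟩

lemma eps1_eq {η : Fin L → Bool} {e : ℤ} (hb : ∀ j ≤ L, -e ≤ pathS L η j)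
    (ha : ∃ j ≤ L, pathS L η j = -e) : eps1 L η = e := by
  unfold eps1
  obtain ⟨j, hj, hje⟩ := ha
  have h1 : -e ≤ (Finset.range (L + 1)).inf'
      ⟨0, Finset.mem_range.mpr (Nat.succ_pos L)⟩ (pathS L η) :=
    Finset.le_inf' _ _ fun k hk => hb k (Nat.lt_succ_iff.mp (Finset.mem_range.mp hk))
  have h2 : (Finset.range (L + 1)).inf'
      ⟨0, Finset.mem_range.mpr (Nat.succ_pos L)⟩ (pathS L η) ≤ -e := by
    rw [← hje]
    exact Finset.inf'_le _ (Finset.mem_range.mpr (by omega))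
  omega

lemma Nat.sInf_eq' {S : Set ℕ} {m : ℕ} (h1 : m ∈ S) (h2 : ∀ k < m, k ∉ S) : sInf S = m := by
  refine le_antisymm (Nat.sInf_le h1) ?_
  by_contra h
  push_neg at h
  exact h2 _ h (Nat.sInf_mem ⟨m, h1⟩)

end helpers

noncomputable def phi (L : ℕ) (r : ℤ) (η : Fin L → Bool) : Fin L → Bool :=
  flipb L η (sInf {i | pathS L η i = -r} - 1)

noncomputable def psi (L : ℕ) (r : ℤ) (η : Fin L → Bool) : Fin L → Bool :=
  flipb L η (Nat.findGreatest (fun j => pathS L η j = 1 - r) L)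

lemma phi_spec {L : ℕ} {r : ℤ} (hr : 1 ≤ r) {η : Fin L → Bool} (heps : eps1 L η = r) :
    (ones L (phi L r η) : ℤ) = (ones L η : ℤ) - 1 ∧
    eps1 L (phi L r η) = r - 1 ∧
    energy L (phi L r η) = energy L η ∧
    psi L r (phi L r η) = η := by
  have hbnd : ∀ j ≤ L, -r ≤ pathS L η j := fun j hj => eps1_le heps hj
  obtain ⟨j0, hj0L, hj0⟩ := eps1_attained heps
  set m : ℕ := sInf {i | pathS L η i = -r} with hm
  have hne : Set.Nonempty {i | pathS L η i = -r} := ⟨j0, hj0⟩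
  have hmem : pathS L η m = -r := Nat.sInf_mem hne
  have hmle : m ≤ L := le_trans (Nat.sInf_le hj0) hj0L
  have hmin : ∀ k < m, pathS L η k ≠ -r := fun k hk => Nat.notMem_of_lt_sInf hk
  have hm0 : m ≠ 0 := by
    intro h
    rw [h, pathS_zero] at hmem
    omega
  have hkey : pathS L η (m - 1) = -r + 1 ∧ ext L η (m - 1) = true := by
    have h1 : pathS L η m
        = pathS L η (m - 1) + (1 - 2 * (if ext L η (m - 1) = true then 1 else 0)) := by
      conv_lhs => rw [show m = (m - 1) + 1 by omega]
      exact pathS_succ η (m - 1)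
    have h2 : -r ≤ pathS L η (m - 1) := hbnd _ (by omega)
    have h3 : pathS L η (m - 1) ≠ -r := hmin _ (by omega)
    by_cases hb : ext L η (m - 1) = true
    · rw [if_pos hb] at h1
      exact ⟨by omega, hb⟩
    · rw [if_neg hb] at h1
      omega
  obtain ⟨hprev, hEprev⟩ := hkey
  have hiL : m - 1 < L := by
    by_contra h
    push_neg at h
    rw [ext_eq_false h] at hEprev
    exact Bool.false_ne_true hEprev
  have hEm : ext L η m = false := by
    by_cases hmL : m < L
    · by_contra h
      have hb : ext L η m = true := by simpa using h
      have hstep := pathS_succ η m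
      rw [if_pos hb, hmem] at hstep
      have h2 := hbnd (m + 1) (by omega)
      omega
    · exact ext_eq_false (by omega)
  have hphi : phi L r η = flipb L η (m - 1) := rfl
  have hpath : ∀ j, pathS L (phi L r η) j = pathS L η j + (if m - 1 < j then 2 else 0) := by
    intro j
    rw [hphi, pathS_flipb η hiL j]
    simp [hEprev]
  have hones : (ones L (phi L r η) : ℤ) = (ones L η : ℤ) - 1 := by
    rw [hphi, ones_flipb η hiL, if_pos hEprev]
    ring
  have heps' : eps1 L (phi L r η) = r - 1 := by
    apply eps1_eq
    · intro j hj
      rw [hpath j]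
      by_cases hjm : m - 1 < j
      · have h2 := hbnd j hj
        rw [if_pos hjm]
        omega
      · rw [if_neg hjm]
        have h2 := hbnd j hj
        have h3 := hmin j (by omega)
        omega
    · refine ⟨m - 1, by omega, ?_⟩
      rw [hpath, if_neg (by omega), hprev]
      ring
  have hext : ∀ k, ext L (phi L r η) k = if k = m - 1 then !(ext L η k) else ext L η k :=
    fun k => by rw [hphi]; exact ext_flipb η hiL k
  have hE : energy L (phi L r η) = energy L η := by
    unfold energy
    apply Finset.sum_congr rfl
    intro j hj
    rw [Finset.mem_range] at hj
    by_cases h1 : j = m - 1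
    · subst h1
      have hmm : m - 1 + 1 = m := by omega
      rw [hext (m - 1), hext (m - 1 + 1), if_pos rfl, hmm, if_neg (show ¬(m = m - 1) by omega), hEprev, hEm]
      simp
    · by_cases h2 : j + 1 = m - 1
      · have hE2 : ext L η j = true := by
          by_contra hc
          have hb : ext L η j = false := by simpa using hc
          have hstep := pathS_succ η j
          simp only [hb] at hstep
          rw [h2, hprev] at hstep
          have h3 := hmin j (by omega)
          simp at hstep
          omega
        rw [hext j, hext (j + 1), if_neg h1, if_pos h2, hE2]
        simp
      · rw [hext j, hext (j + 1), if_neg h1, if_neg h2]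
  have hpsiphi : psi L r (phi L r η) = η := by
    have hfg : Nat.findGreatest (fun j => pathS L (phi L r η) j = 1 - r) L = m - 1 := by
      rw [Nat.findGreatest_eq_iff]
      refine ⟨by omega, fun _ => ?_, fun n hn hnL => ?_⟩
      · show pathS L (phi L r η) (m - 1) = 1 - r
        rw [hpath, if_neg (by omega), hprev]
        ring
      · show ¬ pathS L (phi L r η) n = 1 - r
        rw [hpath n, if_pos (by omega)]
        have h3 := hbnd n hnL
        omega
    unfold psi
    rw [hfg, hphi, flipb_flipb]
  exact ⟨hones, heps', hE, hpsiphi⟩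

lemma psi_spec {L s r : ℕ} (hr : 1 ≤ r) (hs : 1 ≤ s) (h2 : 2 * s ≤ L + r) {η : Fin L → Bool}
    (hones : ones L η = s - 1) (heps : eps1 L η = (r : ℤ) - 1) :
    ones L (psi L (r : ℤ) η) = s ∧ eps1 L (psi L (r : ℤ) η) = (r : ℤ) ∧
    phi L (r : ℤ) (psi L (r : ℤ) η) = η := by
  have hbnd : ∀ j ≤ L, -((r : ℤ) - 1) ≤ pathS L η j := fun j hj => eps1_le heps hj
  obtain ⟨j0, hj0L, hj0⟩ := eps1_attained heps
  set M : ℕ := Nat.findGreatest (fun j => pathS L η j = 1 - (r : ℤ)) L with hM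
  have hj0' : pathS L η j0 = 1 - (r : ℤ) := by omega
  have hPM : pathS L η M = 1 - (r : ℤ) := by
    have h0 := Nat.findGreatest_spec (P := fun j => pathS L η j = 1 - (r : ℤ)) hj0L hj0'
    rwa [← hM] at h0
  have hMle : M ≤ L := hM ▸ Nat.findGreatest_le L
  have hgr : ∀ n, M < n → n ≤ L → pathS L η n ≠ 1 - (r : ℤ) :=
    fun n hn hnL => Nat.findGreatest_is_greatest (hM ▸ hn) hnL
  have hML : M < L := by
    rcases Nat.lt_or_ge M L with h | h
    · exact h
    exfalso
    have hML' : M = L := by omega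
    have hPL := pathS_length η
    rw [hones] at hPL
    rw [hML'] at hPM
    have hc : ((s - 1 : ℕ) : ℤ) = (s : ℤ) - 1 := by omega
    rw [hc] at hPL
    omega
  have hEM : ext L η M = false := by
    by_contra h
    have hb : ext L η M = true := by simpa using h
    have hstep := pathS_succ η M
    rw [if_pos hb, hPM] at hstep
    have hge := hbnd (M + 1) (by omega)
    omega
  have hstep2 : pathS L η (M + 1) = 2 - (r : ℤ) := by
    have hstep := pathS_succ η M
    rw [if_neg (show ¬ ext L η M = true by simp [hEM]), hPM] at hstep
    omega
  have hpsi : psi L (r : ℤ) η = flipb L η M := rfl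
  have hpath : ∀ j, pathS L (psi L (r : ℤ) η) j = pathS L η j + (if M < j then -2 else 0) := by
    intro j
    rw [hpsi, pathS_flipb η hML j]
    simp [hEM]
  have hones' : ones L (psi L (r : ℤ) η) = s := by
    have h1 := ones_flipb η hML
    rw [if_neg (show ¬ ext L η M = true by simp [hEM]), ← hpsi, hones] at h1
    omega
  have heps' : eps1 L (psi L (r : ℤ) η) = (r : ℤ) := by
    apply eps1_eq
    · intro j hj
      rw [hpath j]
      by_cases hc : M < j
      · rw [if_pos hc]
        have h3 := hbnd j hj
        have h4 := hgr j hc hj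
        omega
      · rw [if_neg hc]
        have h3 := hbnd j hj
        omega
    · refine ⟨M + 1, by omega, ?_⟩
      rw [hpath, if_pos (show M < M + 1 by omega), hstep2]
      ring
  have hphipsi : phi L (r : ℤ) (psi L (r : ℤ) η) = η := by
    have hinf : sInf {i | pathS L (psi L (r : ℤ) η) i = -(r : ℤ)} = M + 1 := by
      apply Nat.sInf_eq'
      · show pathS L (psi L (r : ℤ) η) (M + 1) = -(r : ℤ)
        rw [hpath, if_pos (show M < M + 1 by omega), hstep2]
        ring
      · intro k hk hkS
        have hkM : ¬ M < k := by omega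
        rw [Set.mem_setOf_eq, hpath, if_neg hkM] at hkS
        have h3 := hbnd k (by omega)
        omega
    unfold phi
    rw [hinf]
    simp only [Nat.add_sub_cancel]
    rw [hpsi, flipb_flipb]
  exact ⟨hones', heps', hphipsi⟩

lemma step (L s r : ℕ) (hs : 1 ≤ s) (hr : 1 ≤ r) (h2 : 2 * s ≤ L + r) :
    ∑ η ∈ Finset.univ.filter (fun η : Fin L → Bool => ones L η = s ∧ eps1 L η = (r : ℤ)),
      (X : PowerSeries ℚ) ^ energy L η =
    ∑ η ∈ Finset.univ.filter
        (fun η : Fin L → Bool => ones L η = s - 1 ∧ eps1 L η = (r : ℤ) - 1),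
      (X : PowerSeries ℚ) ^ energy L η := by
  have hr' : (1 : ℤ) ≤ (r : ℤ) := by omega
  apply Finset.sum_nbij' (i := phi L (r : ℤ)) (j := psi L (r : ℤ))
  · intro a ha
    rw [Finset.mem_filter] at ha ⊢
    obtain ⟨-, h1, heps⟩ := ha
    obtain ⟨o1, e1, -, -⟩ := phi_spec hr' heps
    refine ⟨Finset.mem_univ _, ?_, e1⟩
    rw [h1] at o1
    omega
  · intro b hb
    rw [Finset.mem_filter] at hb ⊢
    obtain ⟨-, h1, heps⟩ := hb
    obtain ⟨o1, e1, -⟩ := psi_spec hr hs h2 h1 heps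
    exact ⟨Finset.mem_univ _, o1, e1⟩
  · intro a ha
    rw [Finset.mem_filter] at ha
    exact (phi_spec hr' ha.2.2).2.2.2
  · intro b hb
    rw [Finset.mem_filter] at hb
    exact (psi_spec hr hs h2 hb.2.1 hb.2.2).2.2
  · intro a ha
    rw [Finset.mem_filter] at ha
    rw [(phi_spec hr' ha.2.2).2.2.1]

lemma main2 (L : ℕ) : ∀ r s : ℕ, r ≤ s → s ≤ L → 2 * s ≤ L + r →
    ∑ η ∈ Finset.univ.filter (fun η : Fin L → Bool => ones L η = s ∧ eps1 L η = (r : ℤ)),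
      (X : PowerSeries ℚ) ^ energy L η =
    ∑ η ∈ Finset.univ.filter (fun η : Fin L → Bool => ones L η = s - r ∧ eps1 L η = 0),
      (X : PowerSeries ℚ) ^ energy L η := by
  intro r
  induction r with
  | zero =>
    intro s _ _ _
    simp
  | succ r ih =>
    intro s hrs hsL h2
    have h1 := step L s (r + 1) (by omega) (by omega) h2
    rw [h1]
    have hc : ((r + 1 : ℕ) : ℤ) - 1 = (r : ℤ) := by push_cast; ring
    simp only [hc]
    rw [ih (s - 1) (by omega) (by omega) (by omega)]
    have hd : s - 1 - r = s - (r + 1) := by omega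
    rw [hd]

/-- For `0 ≤ r ≤ s ≤ L` with `2s ≤ L + r`, the identity
`[L, s-r]_q - [L, s-r-1]_q = [L, s'-0]_q - [L, s'-1]_q` holds with `s' = s - r`;
equivalently, the `q`-enumeration of binary sequences of length `L` with `s` ones
and `ε₁`-value `r` equals that of sequences with `s - r` ones and `ε₁`-value `0`. -/
theorem stmt18 (L s r : ℕ) (hr : r ≤ s) (hs : s ≤ L) (h2 : 2 * s ≤ L + r) :
    (gauss L ((s : ℤ) - r) - gauss L ((s : ℤ) - r - 1) =
        gauss L ((s - r : ℕ)) - gauss L (((s - r : ℕ) : ℤ) - 1)) ∧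
      ∑ η ∈ Finset.univ.filter
          (fun η : Fin L → Bool => ones L η = s ∧ eps1 L η = (r : ℤ)),
          (X : PowerSeries ℚ) ^ (energy L η) =
        ∑ η ∈ Finset.univ.filter
          (fun η : Fin L → Bool => ones L η = s - r ∧ eps1 L η = 0),
          (X : PowerSeries ℚ) ^ (energy L η) := by
  constructor
  · rw [Nat.cast_sub hr]
  · exact main2 L r s hr hs h2
end
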